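/- For 0 < α ≤ 12 and n ≥ 2, the function p(x,y) = |x − y|/√(|x − y|² + α xₙ yₙ) on the upper half-space ℍⁿ = {x ∈ ℝⁿ : xₙ > 0} satisfies the triangle inequality p(x,y) ≤ p(x,z) + p(z,y) for all x, y, z ∈ ℍⁿ, and hence is a metric on ℍⁿ. For α > 12 it is not a metric. -/

import Mathlib

/-!
Put `s(x, y) = |x - y| / (2 √(xₙ yₙ))`, which is `sinh (ρ(x, y) / 2)` for the hyperbolic distance
`ρ`; then `p = F ∘ s` with `F t = t / √(t² + α / 4)` increasing. Ptolemy's inequality for `x, y, z`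
and the mirror image of `z` in `{xₙ = 0}` is exactly `s(x, y) ≤ sinh (A + B)`, where
`sinh A = s(x, z)` and `sinh B = s(z, y)`. The triangle inequality thus reduces to
`F (sinh (A + B)) ≤ F (sinh A) + F (sinh B)`, the subadditivity of `A ↦ F (sinh A)`, which is
concave on `[0, ∞)` exactly when `α ≤ 12`; we check it through a polynomial identity. For `α > 12`
the inequality already fails for three points on a vertical line.
-/

open Real
open scoped RealInnerProductSpace

section Scalar

variable {β : ℝ}

lemma div_sqrt_sq_add_le_div_sqrt_sq_add (hβ : 0 < β) {a b : ℝ} (ha : 0 ≤ a) (hab : a ≤ b) :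
    a / √(a ^ 2 + β) ≤ b / √(b ^ 2 + β) := by
  have hb : 0 ≤ b := ha.trans hab
  rw [div_le_div_iff₀ (by positivity) (by positivity), ← sqrt_sq ha, ← sqrt_sq hb,
    ← sqrt_mul (sq_nonneg a), ← sqrt_mul (sq_nonneg b), sqrt_sq ha, sqrt_sq hb]
  exact sqrt_le_sqrt (by nlinarith [mul_le_mul hab hab ha hb])

lemma div_sqrt_sq_add_lt_one (hβ : 0 < β) (a : ℝ) : a / √(a ^ 2 + β) < 1 := by
  rw [div_lt_one (by positivity)]
  calc a ≤ |a| := le_abs_self a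
    _ = √(a ^ 2) := (sqrt_sq_eq_abs a).symm
    _ < √(a ^ 2 + β) := sqrt_lt_sqrt (sq_nonneg a) (by linarith)

lemma div_div_sqrt_div_sq_add {d : ℝ} (hd : 0 < d) (a : ℝ) :
    a / d / √((a / d) ^ 2 + β) = a / √(a ^ 2 + β * d ^ 2) := by
  have h : (a / d) ^ 2 + β = (a ^ 2 + β * d ^ 2) / d ^ 2 := by field_simp
  rw [h, sqrt_div' _ (sq_nonneg d), sqrt_sq hd.le, div_div_div_cancel_right₀ hd.ne']

lemma sqrt_one_add_div_sq {d : ℝ} (hd : 0 < d) (c : ℝ) :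
    √(1 + (c / d) ^ 2) = √(c ^ 2 + d ^ 2) / d := by
  have h : 1 + (c / d) ^ 2 = (c ^ 2 + d ^ 2) / d ^ 2 := by field_simp; ring
  rw [h, sqrt_div' _ (sq_nonneg d), sqrt_sq hd.le]

/-- For `u = √(b² + β)`, `v = √(c² + β)`, `B = √(1 + b²)`, `C = √(1 + c²)` this is the squared,
denominator-free form of `F (bC + cB) ≤ F b + F c` with `F t = t / √(t² + β)`. -/
lemma sq_mul_sub_le_of_le_three (hβ : 0 < β) (hβ3 : β ≤ 3) {b c u v B C : ℝ}
    (hb : 0 ≤ b) (hc : 0 ≤ c) (hu : 0 < u) (hv : 0 < v)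
    (hu2 : u ^ 2 = b ^ 2 + β) (hv2 : v ^ 2 = c ^ 2 + β) (hB2 : B ^ 2 = 1 + b ^ 2)
    (hC2 : C ^ 2 = 1 + c ^ 2) (hlt : b * v + c * u < u * v) :
    (b * C + c * B) ^ 2 * ((u * v) ^ 2 - (b * v + c * u) ^ 2) ≤ β * (b * v + c * u) ^ 2 := by
  set D := b * v + c * u
  set Δ := (u * v) ^ 2 - D ^ 2
  have hD : 0 ≤ D := by positivity
  have hΔ_nonneg : 0 ≤ Δ := sub_nonneg.2 (pow_le_pow_left₀ hD hlt.le 2)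
  have hΔ_eq : Δ = β ^ 2 - b ^ 2 * c ^ 2 - 2 * b * c * (u * v) := by
    linear_combination (v ^ 2 - c ^ 2) * hu2 + β * hv2
  have cauchy_schwarz : u * v * (b * C + c * B) ^ 2 ≤ D * (b * u * C ^ 2 + c * v * B ^ 2) := by
    nlinarith [mul_nonneg (mul_nonneg hb hc) (sq_nonneg (v * B - u * C))]
  -- every factor on the right is nonnegative once `β ≤ 3`
  have factorization : β * (β * (u * v) * D - (b * u * C ^ 2 + c * v * B ^ 2) * Δ)
      = D * (b * c) * (b * c * (u * v) + 2 * D ^ 2 + (3 - β) * Δ) := by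
    rw [hΔ_eq, hB2, hC2]
    linear_combination (c*β^2*v - 2*b*c^2*u*v^2 - 2*b^2*c*v^3 + 2*b^2*c*β*v + b^2*c^3*v) * hu2
      + (b*β^2*u - 2*b^2*c*β*v - b^3*c^2*u - 2*b^4*c*v) * hv2
      + 2 * D * b * c * ((v ^ 2 - c ^ 2) * hu2 + β * hv2)
  have weighted_le : (b * u * C ^ 2 + c * v * B ^ 2) * Δ ≤ β * (u * v) * D := by
    have : 0 ≤ β * (β * (u * v) * D - (b * u * C ^ 2 + c * v * B ^ 2) * Δ) := by
      rw [factorization]; have := mul_nonneg hb hc; positivity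
    linarith [nonneg_of_mul_nonneg_right this hβ]
  refine le_of_mul_le_mul_left ?_ (mul_pos hu hv)
  calc u * v * ((b * C + c * B) ^ 2 * Δ) = u * v * (b * C + c * B) ^ 2 * Δ := by ring
    _ ≤ D * (b * u * C ^ 2 + c * v * B ^ 2) * Δ := by gcongr
    _ ≤ D * (β * (u * v) * D) := by rw [mul_assoc]; gcongr
    _ = u * v * (β * D ^ 2) := by ring

lemma div_sqrt_sq_add_sinh_add_le (hβ : 0 < β) (hβ3 : β ≤ 3) {b c : ℝ} (hb : 0 ≤ b) (hc : 0 ≤ c) :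
    (b * √(1 + c ^ 2) + c * √(1 + b ^ 2)) / √((b * √(1 + c ^ 2) + c * √(1 + b ^ 2)) ^ 2 + β)
      ≤ b / √(b ^ 2 + β) + c / √(c ^ 2 + β) := by
  have hu : 0 < √(b ^ 2 + β) := by positivity
  have hv : 0 < √(c ^ 2 + β) := by positivity
  rw [div_add_div _ _ hu.ne' hv.ne']
  rcases le_or_gt (√(b ^ 2 + β) * √(c ^ 2 + β)) (b * √(c ^ 2 + β) + √(b ^ 2 + β) * c)
    with hge | hlt
  · exact (div_sqrt_sq_add_lt_one hβ _).le.trans ((one_le_div (by positivity)).2 hge)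
  rw [div_le_div_iff₀ (by positivity) (by positivity)]
  refine le_of_sq_le_sq ?_ (by positivity)
  have core := sq_mul_sub_le_of_le_three hβ hβ3 hb hc hu hv (sq_sqrt (by positivity))
    (sq_sqrt (by positivity)) (sq_sqrt (by positivity)) (sq_sqrt (by positivity))
    (by linarith)
  have hX := sq_sqrt (by positivity : 0 ≤ (b * √(1 + c ^ 2) + c * √(1 + b ^ 2)) ^ 2 + β)
  linear_combination core - (b * √(c ^ 2 + β) + √(b ^ 2 + β) * c) ^ 2 * hX

lemma two_mul_div_sqrt_lt {α t : ℝ} (ht : 1 < t) (hαt : 3 * (t + 1) ^ 2 < α * t) :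
    2 * ((t - 1) / √((t - 1) ^ 2 + α * t)) < (t ^ 2 - 1) / √((t ^ 2 - 1) ^ 2 + α * t ^ 2) := by
  have hA : 0 < (t - 1) ^ 2 + α * t := by nlinarith
  have hB : 0 < (t ^ 2 - 1) ^ 2 + α * t ^ 2 := by nlinarith
  rw [← mul_div_assoc, div_lt_div_iff₀ (sqrt_pos.2 hA) (sqrt_pos.2 hB)]
  refine lt_of_pow_lt_pow_left₀ 2 (mul_nonneg (by nlinarith) (sqrt_nonneg _)) ?_
  rw [mul_pow, mul_pow, mul_pow, sq_sqrt hA.le, sq_sqrt hB.le]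
  nlinarith [mul_pos (pow_pos (sub_pos.2 ht) 4) (sub_pos.2 hαt)]

end Scalar

section Halfspace

variable {V : Type*} [NormedAddCommGroup V] [InnerProductSpace ℝ V] {e : V}

lemma norm_sub_reflection_sq (he : ‖e‖ = 1) (w z : V) :
    ‖w - (z - (2 * ⟪z, e⟫) • e)‖ ^ 2 = ‖w - z‖ ^ 2 + 4 * (⟪w, e⟫ * ⟪z, e⟫) := by
  rw [sub_sub_eq_add_sub, add_sub_right_comm, norm_add_sq_real, inner_smul_right, norm_smul,
    he, inner_sub_left, real_inner_comm, Real.norm_eq_abs, mul_one, sq_abs]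
  ring

/-- Ptolemy's inequality for `x, y, z` and the mirror image of `z` in the hyperplane `e⊥`. -/
lemma ptolemy_reflection (he : ‖e‖ = 1) {x y z : V} (hz : 0 ≤ ⟪z, e⟫) :
    ‖x - y‖ * (2 * ⟪z, e⟫) ≤ ‖x - z‖ * √(‖z - y‖ ^ 2 + 4 * (⟪z, e⟫ * ⟪y, e⟫))
      + ‖z - y‖ * √(‖x - z‖ ^ 2 + 4 * (⟪x, e⟫ * ⟪z, e⟫)) := by
  set z' := z - (2 * ⟪z, e⟫) • e
  have hzz' : dist z z' = 2 * ⟪z, e⟫ := by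
    rw [dist_eq_norm, sub_sub_cancel, norm_smul, he, mul_one, Real.norm_eq_abs,
      abs_of_nonneg (by positivity)]
  have hdist : ∀ w, dist w z' = √(‖w - z‖ ^ 2 + 4 * (⟪w, e⟫ * ⟪z, e⟫)) := fun w => by
    rw [dist_eq_norm, ← norm_sub_reflection_sq he, sqrt_sq (norm_nonneg _)]
  have := EuclideanGeometry.mul_dist_le_mul_dist_add_mul_dist x z y z'
  rwa [hzz', hdist, hdist, dist_eq_norm, dist_eq_norm, dist_eq_norm, ← norm_neg (y - z), neg_sub,
    mul_comm ⟪y, e⟫] at this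

/-- `sinh (ρ(x, y) / 2)` for the hyperbolic distance `ρ` of the half-space `{x | 0 < ⟪x, e⟫}`. -/
noncomputable def sinhHalfDist (e x y : V) : ℝ := ‖x - y‖ / (2 * √(⟪x, e⟫ * ⟪y, e⟫))

lemma sinhHalfDist_nonneg (e x y : V) : 0 ≤ sinhHalfDist e x y := by
  unfold sinhHalfDist; positivity

lemma sinhHalfDist_le (he : ‖e‖ = 1) {x y z : V} (hx : 0 < ⟪x, e⟫) (hy : 0 < ⟪y, e⟫)
    (hz : 0 < ⟪z, e⟫) :
    sinhHalfDist e x y ≤ sinhHalfDist e x z * √(1 + sinhHalfDist e z y ^ 2)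
      + sinhHalfDist e z y * √(1 + sinhHalfDist e x z ^ 2) := by
  have two_sqrt_sq : ∀ r : ℝ, 0 ≤ r → (2 * √r) ^ 2 = 4 * r := fun r hr => by
    rw [mul_pow, sq_sqrt hr]; norm_num
  have hxz : √(⟪x, e⟫ * ⟪z, e⟫) * √(⟪z, e⟫ * ⟪y, e⟫) = ⟪z, e⟫ * √(⟪x, e⟫ * ⟪y, e⟫) := by
    rw [← sqrt_mul (by positivity), show ⟪x, e⟫ * ⟪z, e⟫ * (⟪z, e⟫ * ⟪y, e⟫)
      = ⟪z, e⟫ ^ 2 * (⟪x, e⟫ * ⟪y, e⟫) by ring, sqrt_mul (sq_nonneg _), sqrt_sq hz.le]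
  unfold sinhHalfDist
  rw [sqrt_one_add_div_sq (by positivity), sqrt_one_add_div_sq (by positivity),
    two_sqrt_sq _ (by positivity), two_sqrt_sq _ (by positivity)]
  calc ‖x - y‖ / (2 * √(⟪x, e⟫ * ⟪y, e⟫))
      = ‖x - y‖ * (2 * ⟪z, e⟫) / (4 * (√(⟪x, e⟫ * ⟪z, e⟫) * √(⟪z, e⟫ * ⟪y, e⟫))) := by
        rw [hxz]; field_simp; ring
    _ ≤ (‖x - z‖ * √(‖z - y‖ ^ 2 + 4 * (⟪z, e⟫ * ⟪y, e⟫))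
          + ‖z - y‖ * √(‖x - z‖ ^ 2 + 4 * (⟪x, e⟫ * ⟪z, e⟫)))
          / (4 * (√(⟪x, e⟫ * ⟪z, e⟫) * √(⟪z, e⟫ * ⟪y, e⟫))) := by
        gcongr; exact ptolemy_reflection he hz.le
    _ = _ := by field_simp; ring

/-- The point pair function `p` of the half-space `{x | 0 < ⟪x, e⟫}`. -/
noncomputable def ppf (α : ℝ) (e x y : V) : ℝ :=
  ‖x - y‖ / √(‖x - y‖ ^ 2 + α * ⟪x, e⟫ * ⟪y, e⟫)

lemma ppf_eq_sinhHalfDist (α : ℝ) {x y : V} (hx : 0 < ⟪x, e⟫) (hy : 0 < ⟪y, e⟫) :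
    ppf α e x y = sinhHalfDist e x y / √(sinhHalfDist e x y ^ 2 + α / 4) := by
  rw [sinhHalfDist, div_div_sqrt_div_sq_add (by positivity), mul_pow, sq_sqrt (by positivity),
    ppf]
  ring_nf

lemma ppf_le_add (he : ‖e‖ = 1) {α : ℝ} (hα : 0 < α) (hα12 : α ≤ 12) {x y z : V}
    (hx : 0 < ⟪x, e⟫) (hy : 0 < ⟪y, e⟫) (hz : 0 < ⟪z, e⟫) :
    ppf α e x y ≤ ppf α e x z + ppf α e z y := by
  rw [ppf_eq_sinhHalfDist α hx hy, ppf_eq_sinhHalfDist α hx hz, ppf_eq_sinhHalfDist α hz hy]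
  have hβ : 0 < α / 4 := by positivity
  exact (div_sqrt_sq_add_le_div_sqrt_sq_add hβ (sinhHalfDist_nonneg e x y)
    (sinhHalfDist_le he hx hy hz)).trans
    (div_sqrt_sq_add_sinh_add_le hβ (by linarith) (sinhHalfDist_nonneg e x z)
      (sinhHalfDist_nonneg e z y))

lemma ppf_comm (α : ℝ) (e x y : V) : ppf α e x y = ppf α e y x := by
  rw [ppf, ppf, norm_sub_rev, mul_right_comm]

lemma ppf_eq_zero_iff {α : ℝ} (hα : 0 < α) {x y : V} (hx : 0 < ⟪x, e⟫) (hy : 0 < ⟪y, e⟫) :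
    ppf α e x y = 0 ↔ x = y := by
  have : 0 < √(‖x - y‖ ^ 2 + α * ⟪x, e⟫ * ⟪y, e⟫) := by positivity
  rw [ppf, div_eq_zero_iff, or_iff_left this.ne', norm_eq_zero, sub_eq_zero]

lemma ppf_smul (α : ℝ) (e : V) {c : ℝ} (hc : 0 < c) (x y : V) :
    ppf α e (c • x) (c • y) = ppf α e x y := by
  have h : ‖c • x - c • y‖ ^ 2 + α * ⟪c • x, e⟫ * ⟪c • y, e⟫
      = c ^ 2 * (‖x - y‖ ^ 2 + α * ⟪x, e⟫ * ⟪y, e⟫) := by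
    rw [← smul_sub, norm_smul, real_inner_smul_left, real_inner_smul_left, norm_of_nonneg hc.le]
    ring
  rw [ppf, ppf, h, sqrt_mul (sq_nonneg c), sqrt_sq hc.le, ← smul_sub, norm_smul,
    norm_of_nonneg hc.le, mul_div_mul_left _ _ hc.ne']

lemma ppf_self_smul (he : ‖e‖ = 1) (α t : ℝ) :
    ppf α e e (t • e) = |t - 1| / √((t - 1) ^ 2 + α * t) := by
  rw [ppf, show e - t • e = (1 - t) • e by rw [sub_smul, one_smul], norm_smul, he, mul_one,
    norm_eq_abs, abs_sub_comm, sq_abs, real_inner_smul_left, real_inner_self_eq_norm_sq, he]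
  ring_nf

lemma exists_ppf_gt_add (he : ‖e‖ = 1) {α : ℝ} (h12 : 12 < α) :
    ∃ x y z : V, 0 < ⟪x, e⟫ ∧ 0 < ⟪y, e⟫ ∧ 0 < ⟪z, e⟫ ∧
      ppf α e x y > ppf α e x z + ppf α e z y := by
  -- `α t - 3 (t + 1)² = α - 12` at `t = (α - 9) / 3`
  obtain ⟨t, ht, hαt⟩ : ∃ t : ℝ, 1 < t ∧ 3 * (t + 1) ^ 2 < α * t :=
    ⟨(α - 9) / 3, by linarith, by nlinarith⟩
  have height : ∀ s : ℝ, ⟪s • e, e⟫ = s := fun s => by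
    rw [real_inner_smul_left, real_inner_self_eq_norm_sq, he]; ring
  refine ⟨e, (t ^ 2) • e, t • e, by rw [real_inner_self_eq_norm_sq, he]; norm_num,
    by rw [height]; positivity, by rw [height]; linarith, ?_⟩
  have hzy : ppf α e (t • e) ((t ^ 2) • e) = ppf α e e (t • e) := by
    rw [sq, mul_smul, ppf_smul α e (by linarith)]
  rw [hzy, ppf_self_smul he, ppf_self_smul he,
    abs_of_pos (by nlinarith), abs_of_pos (by linarith)]
  linarith [two_mul_div_sqrt_lt ht hαt]

end Halfspace

theorem ppf_alpha_halfspace_general (n : ℕ) (α : ℝ) (hα : 0 < α)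
    (last : Fin n)
    (p : EuclideanSpace ℝ (Fin n) → EuclideanSpace ℝ (Fin n) → ℝ)
    (hp : ∀ x y, p x y = ‖x - y‖ / Real.sqrt (‖x - y‖^2 + α * x last * y last)) :
    (α ≤ 12 →
      (∀ x y z : EuclideanSpace ℝ (Fin n), 0 < x last → 0 < y last → 0 < z last →
        p x y ≤ p x z + p z y) ∧
      (∀ x y : EuclideanSpace ℝ (Fin n), 0 < x last → 0 < y last → p x y = p y x) ∧
      (∀ x y : EuclideanSpace ℝ (Fin n), 0 < x last → 0 < y last → (p x y = 0 ↔ x = y))) ∧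
    (12 < α → ∃ x y z : EuclideanSpace ℝ (Fin n),
      0 < x last ∧ 0 < y last ∧ 0 < z last ∧ p x y > p x z + p z y) := by
  set e : EuclideanSpace ℝ (Fin n) := EuclideanSpace.single last 1
  have he : ‖e‖ = 1 := by simp [e]
  have height : ∀ x : EuclideanSpace ℝ (Fin n), x last = ⟪x, e⟫ := fun x => by
    simp [e, EuclideanSpace.inner_single_right]
  have hpe : p = ppf α e := funext₂ fun x y => by rw [hp, ppf, height, height]
  simp only [height, hpe]
  exact ⟨fun hα12 => ⟨fun _ _ _ hx hy hz => ppf_le_add he hα hα12 hx hy hz,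
    fun x y _ _ => ppf_comm α e x y, fun _ _ hx hy => ppf_eq_zero_iff hα hx hy⟩,
    fun h12 => exists_ppf_gt_add he h12⟩

theorem ppf_alpha_halfspace (n : ℕ) (hn : 2 ≤ n) (α : ℝ) (hα : 0 < α)
    (last : Fin n) (hlast : (last : ℕ) = n - 1)
    (p : EuclideanSpace ℝ (Fin n) → EuclideanSpace ℝ (Fin n) → ℝ)
    (hp : ∀ x y, p x y = ‖x - y‖ / Real.sqrt (‖x - y‖^2 + α * x last * y last)) :
    (α ≤ 12 →
      (∀ x y z : EuclideanSpace ℝ (Fin n), 0 < x last → 0 < y last → 0 < z last →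
        p x y ≤ p x z + p z y) ∧
      (∀ x y : EuclideanSpace ℝ (Fin n), 0 < x last → 0 < y last → p x y = p y x) ∧
      (∀ x y : EuclideanSpace ℝ (Fin n), 0 < x last → 0 < y last → (p x y = 0 ↔ x = y))) ∧
    (12 < α → ∃ x y z : EuclideanSpace ℝ (Fin n),
      0 < x last ∧ 0 < y last ∧ 0 < z last ∧ p x y > p x z + p z y) :=
  ppf_alpha_halfspace_general n α hα last p hp
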